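/- If f : X → A is a smooth surjective morphism from a smooth complex projective variety onto an abelian variety, and for every nonzero ω ∈ H⁰(A, Ω¹_A) the zero locus of f*ω on X is empty implies dim(span of such forms) ≤ dim X − κ(X), then dim A ≤ dim X − κ(X). In particular, if X is of general type there is no smooth surjective morphism from X onto a positive-dimensional abelian variety. -/
import Mathlib


open Module

/-!
STATEMENT 10: If `f : X → A` is a smooth surjective morphism from a smooth complex
projective variety onto an abelian variety (so `f* : H⁰(A,Ω¹_A) → H⁰(X,Ω¹_X)` is
injective and every pulled-back nonzero one-form is nowhere vanishing), and the
Luo–Zhang conjecture holds for `X` (any subspace `W` of one-forms whose nonzero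
members have empty zero locus satisfies `dim W ≤ dim X − κ(X)`), then
`dim A ≤ dim X − κ(X)`.  In particular, if `X` is of general type (`κ(X) = dim X`)
then `dim A = 0`, i.e. there is no smooth surjective morphism from `X` onto a
positive-dimensional abelian variety.

Here `Xp` is the set of points of `X`, `Ω = H⁰(X,Ω¹_X)`, `VA = H⁰(A,Ω¹_A)`
(so `finrank ℂ VA = dim A`), and `Zset ω` is the zero locus of `ω`.
-/

theorem stmt10
    (Xp : Type*)
    (Ω : Type*) [AddCommGroup Ω] [Module ℂ Ω] [FiniteDimensional ℂ Ω]
    (VA : Type*) [AddCommGroup VA] [Module ℂ VA] [FiniteDimensional ℂ VA]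
    (Zset : Ω → Set Xp)
    (n κ : ℕ)                              -- n = dim X, κ = κ(X)
    (pull : VA →ₗ[ℂ] Ω)                    -- f* on one-forms
    (hinj : Function.Injective pull)       -- injective since f is surjective
    (hsmooth : ∀ v : VA, v ≠ 0 → Zset (pull v) = ∅)  -- f smooth: f*ω nowhere zero
    (hconj : ∀ W : Submodule ℂ Ω,
      (∀ ω ∈ W, ω ≠ 0 → Zset ω = ∅) → finrank ℂ W ≤ n - κ) :
    finrank ℂ VA ≤ n - κ ∧ (κ = n → finrank ℂ VA = 0) := by
  have key : finrank ℂ VA ≤ n - κ := by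
    have h := hconj (LinearMap.range pull) ?_
    · rwa [LinearMap.finrank_range_of_inj hinj] at h
    · rintro ω ⟨v, rfl⟩ hω
      exact hsmooth v (fun h => hω (by rw [h, map_zero]))
  exact ⟨key, fun hk => Nat.le_zero.mp (by simpa [hk] using key)⟩
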